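/- arXiv:2303.13264 — 2 statements merged into one kernel-verified Lean document; each statement's English description precedes it below -/
import Mathlib

section
/- Let Π be an orthogonal projector on C^N, h ∈ C^N nonzero with h_∥ = Π h ≠ 0, and let ĥ be a unit vector lying in the range of Π. Then the squared chordal distance decomposes as d²(h, ĥ) = ‖h̃_∥‖² · d²(h_∥, ĥ) + ‖h̃_⊥‖², where h̃_∥ = Π h/‖h‖ and h̃_⊥ = (I−Π)h/‖h‖. -/
/-! Since `ĥ = Π ĥ` and `Π` is self-adjoint, `⟨h_∥, ĥ⟩ = ⟨h, ĥ⟩`, so both chordal distances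
involve the same overlap; and Pythagoras gives `‖h_⊥‖² = ‖h‖² - ‖h_∥‖²`. With
`a = ⟨h, ĥ⟩`, `n = ‖h‖²`, `p = ‖h_∥‖²`, `c = ‖ĥ‖²` the identity becomes
`1 - |a|²/(n c) = (p/n)(1 - |a|²/(p c)) + (n - p)/n`, and when `p = 0` also `a = ⟨h_∥, ĥ⟩ = 0`. -/

open Matrix

/-- Squared Euclidean norm of a complex vector. -/
noncomputable def nsq {n : ℕ} (x : Fin n → ℂ) : ℝ := (star x ⬝ᵥ x).re

/-- Squared chordal distance between two (nonzero) complex vectors. -/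
noncomputable def chordalSq {n : ℕ} (x y : Fin n → ℂ) : ℝ :=
  1 - ‖star x ⬝ᵥ y‖ ^ 2 / (nsq x * nsq y)

section

variable {n : ℕ}

open scoped ComplexOrder in
lemma nsq_ne_zero {x : Fin n → ℂ} (hx : x ≠ 0) : nsq x ≠ 0 :=
  (Complex.pos_iff.1 (dotProduct_star_self_pos_iff.2 hx)).1.ne'

lemma star_mulVec_dotProduct_of_isHermitian {P : Matrix (Fin n) (Fin n) ℂ} (hP : P.IsHermitian)
    (x y : Fin n → ℂ) : star (P *ᵥ x) ⬝ᵥ y = star x ⬝ᵥ P *ᵥ y := by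
  rw [star_mulVec, hP.eq, ← dotProduct_mulVec]

lemma nsq_mulVec_of_isHermitian_of_isIdempotentElem {P : Matrix (Fin n) (Fin n) ℂ}
    (hP : P.IsHermitian) (hP' : IsIdempotentElem P) (x : Fin n → ℂ) :
    nsq (P *ᵥ x) = (star x ⬝ᵥ P *ᵥ x).re := by
  rw [nsq, star_mulVec_dotProduct_of_isHermitian hP, mulVec_mulVec, hP'.eq]

lemma nsq_one_sub_mulVec_of_isHermitian_of_isIdempotentElem {P : Matrix (Fin n) (Fin n) ℂ}
    (hP : P.IsHermitian) (hP' : IsIdempotentElem P) (x : Fin n → ℂ) :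
    nsq ((1 - P) *ᵥ x) = nsq x - nsq (P *ᵥ x) := by
  rw [nsq_mulVec_of_isHermitian_of_isIdempotentElem (isHermitian_one.sub hP) hP'.one_sub,
    nsq_mulVec_of_isHermitian_of_isIdempotentElem hP hP', sub_mulVec, one_mulVec,
    dotProduct_sub, Complex.sub_re, nsq]

lemma chordalSq_eq_of_star_dotProduct_eq {x u y : Fin n → ℂ} (hx : x ≠ 0)
    (hxy : star u ⬝ᵥ y = star x ⬝ᵥ y) :
    chordalSq x y = nsq u / nsq x * chordalSq u y + (nsq x - nsq u) / nsq x := by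
  have hx' := nsq_ne_zero hx
  rcases eq_or_ne u 0 with rfl | hu
  · rw [star_zero, zero_dotProduct] at hxy
    have hnsq0 : nsq (0 : Fin n → ℂ) = 0 := by simp [nsq]
    simp [chordalSq, ← hxy, hnsq0, hx']
  · have hu' := nsq_ne_zero hu
    rw [chordalSq, chordalSq, hxy]
    field_simp
    ring

end

theorem chordalSq_projection_decomposition_general {N : ℕ}
    (P : Matrix (Fin N) (Fin N) ℂ) (hidem : P * P = P) (hherm : Pᴴ = P)
    (h hHat : Fin N → ℂ) (hh : h ≠ 0)
    (hrange : P.mulVec hHat = hHat) :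
    chordalSq h hHat =
      (nsq (P.mulVec h) / nsq h) * chordalSq (P.mulVec h) hHat
        + nsq ((1 - P).mulVec h) / nsq h := by
  have hoverlap : star (P *ᵥ h) ⬝ᵥ hHat = star h ⬝ᵥ hHat := by
    rw [star_mulVec_dotProduct_of_isHermitian hherm, hrange]
  rw [nsq_one_sub_mulVec_of_isHermitian_of_isIdempotentElem hherm hidem]
  exact chordalSq_eq_of_star_dotProduct_eq hh hoverlap

/-- Decomposition of the squared chordal distance to a codeword in the range of an
orthogonal projector: `d²(h,ĥ) = ‖h̃_∥‖² d²(h_∥,ĥ) + ‖h̃_⊥‖²`. -/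
theorem chordalSq_projection_decomposition {N : ℕ}
    (P : Matrix (Fin N) (Fin N) ℂ) (hidem : P * P = P) (hherm : Pᴴ = P)
    (h hHat : Fin N → ℂ) (hh : h ≠ 0) (hpar : P.mulVec h ≠ 0)
    (hunit : nsq hHat = 1) (hrange : P.mulVec hHat = hHat) :
    chordalSq h hHat =
      (nsq (P.mulVec h) / nsq h) * chordalSq (P.mulVec h) hHat
        + nsq ((1 - P).mulVec h) / nsq h :=
  chordalSq_projection_decomposition_general P hidem hherm h hHat hh hrange
end

section
/- Let h be a random nonzero vector in C^N, W ∈ C^{N×K} with orthonormal columns, Π_W = W W^H, and H a finite set of unit vectors in the range of Π_W. Then the total quantization distortion D_H := E_h[ min_{ĥ∈H} d²(h, ĥ) ] equals E_h[ ‖h̃_∥‖² · min_{ĥ∈H} d²(h_∥, ĥ) ] + d_p(W, R̃), where h_∥ = Π_W h, h̃_∥ = h_∥/‖h‖, R̃ = E_h[ h h^H/‖h‖² ], and d_p(W, R̃) = 1 − Tr(Π_W R̃). -/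
/-! For a unit codeword `c` in the range of the orthogonal projection `P = W Wᴴ` one has
`⟪h, c⟫ = ⟪P h, c⟫`, hence `d²(h, c) = g h * d²(P h, c) + (1 - g h)` with
`g h = ‖P h‖² / ‖h‖² ∈ [0, 1]`. This is an increasing affine function of `d²(P h, c)`, so it
commutes with the minimum over the codebook, and integrating it gives the claim because
`E[g] = Tr(P R̃)`, as `hᴴ P h = ‖P h‖²`. -/

open Matrix MeasureTheory

/-- Covariance of the normalized directions `h/‖h‖` under the distribution `μ`. -/
noncomputable def dirCov {N : ℕ} (μ : Measure (Fin N → ℂ)) :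
    Matrix (Fin N) (Fin N) ℂ :=
  Matrix.of fun i j => ∫ h, h i * star (h j) / (nsq h : ℂ) ∂μ

@[fun_prop]
theorem Finset.measurable_inf' {ι δ α : Type*} [MeasurableSpace δ] [MeasurableSpace α]
    [SemilatticeInf α] [MeasurableInf₂ α] {s : Finset ι} (hs : s.Nonempty) {f : ι → δ → α}
    (hf : ∀ i ∈ s, Measurable (f i)) : Measurable fun x => s.inf' hs fun i => f i x := by
  simpa only [← Finset.inf'_apply] using
    Finset.inf'_induction hs f (p := Measurable) (fun _ hf _ hg => Measurable.inf hf hg) hf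

lemma integrable_of_forall_mem_Icc {α : Type*} [MeasurableSpace α] {μ : Measure α}
    [IsFiniteMeasure μ] {f : α → ℝ} (hf : Measurable f) (h01 : ∀ x, f x ∈ Set.Icc 0 1) :
    Integrable f μ :=
  Integrable.of_bound hf.aestronglyMeasurable 1 (ae_of_all _ fun x => by
    rw [Real.norm_of_nonneg (h01 x).1]; exact (h01 x).2)

section Euclidean

variable {n : ℕ}

lemma star_dotProduct_eq_inner (x y : Fin n → ℂ) :
    star x ⬝ᵥ y = inner ℂ (WithLp.toLp 2 x) (WithLp.toLp 2 y) := by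
  rw [EuclideanSpace.inner_toLp_toLp, dotProduct_comm]

lemma nsq_eq_norm_sq (x : Fin n → ℂ) : nsq x = ‖WithLp.toLp 2 x‖ ^ 2 := by
  rw [← inner_self_eq_norm_sq (𝕜 := ℂ), ← star_dotProduct_eq_inner]; rfl

lemma nsq_nonneg (x : Fin n → ℂ) : 0 ≤ nsq x := by
  rw [nsq_eq_norm_sq]; positivity

lemma star_dotProduct_self_eq_nsq (x : Fin n → ℂ) : star x ⬝ᵥ x = (nsq x : ℂ) := by
  rw [star_dotProduct_eq_inner, inner_self_eq_norm_sq_to_K, nsq_eq_norm_sq]; push_cast; rfl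

lemma norm_star_dotProduct_sq_le (x y : Fin n → ℂ) :
    ‖star x ⬝ᵥ y‖ ^ 2 ≤ nsq x * nsq y := by
  rw [star_dotProduct_eq_inner, nsq_eq_norm_sq, nsq_eq_norm_sq, ← mul_pow]
  exact pow_le_pow_left₀ (norm_nonneg _) (norm_inner_le_norm _ _) 2

lemma norm_apply_sq_le_nsq (x : Fin n → ℂ) (i : Fin n) : ‖x i‖ ^ 2 ≤ nsq x := by
  rw [nsq_eq_norm_sq]
  exact pow_le_pow_left₀ (norm_nonneg _) (PiLp.norm_apply_le (WithLp.toLp 2 x) i) 2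

@[fun_prop]
lemma measurable_nsq : Measurable (nsq : (Fin n → ℂ) → ℝ) := by
  unfold nsq; fun_prop

@[fun_prop]
lemma measurable_chordalSq_left (c : Fin n → ℂ) :
    Measurable fun x : Fin n → ℂ => chordalSq x c := by
  unfold chordalSq nsq; fun_prop

lemma chordalSq_nonneg (x y : Fin n → ℂ) : 0 ≤ chordalSq x y := by
  rw [chordalSq, sub_nonneg]
  exact div_le_one_of_le₀ (norm_star_dotProduct_sq_le x y)
    (mul_nonneg (nsq_nonneg x) (nsq_nonneg y))

lemma chordalSq_le_one (x y : Fin n → ℂ) : chordalSq x y ≤ 1 := by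
  rw [chordalSq, sub_le_self_iff]
  exact div_nonneg (sq_nonneg _) (mul_nonneg (nsq_nonneg x) (nsq_nonneg y))

end Euclidean

section Projection

variable {n : ℕ} {P : Matrix (Fin n) (Fin n) ℂ}

lemma Matrix.IsHermitian.star_mulVec_dotProduct (hP : P.IsHermitian) (x y : Fin n → ℂ) :
    star (P *ᵥ x) ⬝ᵥ y = star x ⬝ᵥ P *ᵥ y := by
  rw [star_mulVec, hP.eq, ← dotProduct_mulVec]

lemma star_dotProduct_mulVec_self (hP : P.IsHermitian) (hPP : P * P = P) (x : Fin n → ℂ) :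
    star x ⬝ᵥ P *ᵥ x = (nsq (P *ᵥ x) : ℂ) := by
  rw [← star_dotProduct_self_eq_nsq, hP.star_mulVec_dotProduct, mulVec_mulVec, hPP]

lemma nsq_mulVec_le (hP : P.IsHermitian) (hPP : P * P = P) (x : Fin n → ℂ) :
    nsq (P *ᵥ x) ≤ nsq x := by
  have hsq : nsq (P *ᵥ x) ^ 2 ≤ nsq x * nsq (P *ᵥ x) := by
    simpa [star_dotProduct_mulVec_self hP hPP, abs_of_nonneg (nsq_nonneg _)] using
      norm_star_dotProduct_sq_le x (P *ᵥ x)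
  nlinarith [nsq_nonneg (P *ᵥ x), nsq_nonneg x]

lemma nsq_mulVec_div_nsq_mem_Icc (hP : P.IsHermitian) (hPP : P * P = P) (x : Fin n → ℂ) :
    nsq (P *ᵥ x) / nsq x ∈ Set.Icc 0 1 :=
  ⟨div_nonneg (nsq_nonneg _) (nsq_nonneg _),
    div_le_one_of_le₀ (nsq_mulVec_le hP hPP x) (nsq_nonneg x)⟩

lemma chordalSq_eq_of_mulVec_eq (hP : P.IsHermitian) {c : Fin n → ℂ} (hc : nsq c = 1)
    (hPc : P *ᵥ c = c) (x : Fin n → ℂ) :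
    chordalSq x c = nsq (P *ᵥ x) / nsq x * chordalSq (P *ᵥ x) c
      + (1 - nsq (P *ᵥ x) / nsq x) := by
  have hdot : star x ⬝ᵥ c = star (P *ᵥ x) ⬝ᵥ c := by
    rw [hP.star_mulVec_dotProduct, hPc]
  simp only [chordalSq, hdot, hc, mul_one]
  rcases eq_or_ne (nsq (P *ᵥ x)) 0 with hPx | hPx
  · have : ‖star (P *ᵥ x) ⬝ᵥ c‖ = 0 := by
      simpa [hPx, hc] using norm_star_dotProduct_sq_le (P *ᵥ x) c
    simp [hPx, this]
  rcases eq_or_ne (nsq x) 0 with hx | hx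
  · simp [hx]
  field_simp
  ring

end Projection

section Codebook

variable {n : ℕ} {P : Matrix (Fin n) (Fin n) ℂ}

lemma inf'_chordalSq_eq (hP : P.IsHermitian) {H : Finset (Fin n → ℂ)} (hne : H.Nonempty)
    (hH : ∀ c ∈ H, nsq c = 1 ∧ P *ᵥ c = c) (x : Fin n → ℂ) :
    H.inf' hne (fun c => chordalSq x c) = nsq (P *ᵥ x) / nsq x
        * H.inf' hne (fun c => chordalSq (P *ᵥ x) c) + (1 - nsq (P *ᵥ x) / nsq x) := by
  set g := nsq (P *ᵥ x) / nsq x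
  have hmono : Monotone fun t => g * t + (1 - g) :=
    (monotone_id.const_mul (div_nonneg (nsq_nonneg _) (nsq_nonneg _))).add_const _
  rw [Finset.apply_inf'_eq_inf'_comp hne (fun t => g * t + (1 - g)) fun _ _ => hmono.map_min]
  exact Finset.inf'_congr hne rfl fun c hc =>
    chordalSq_eq_of_mulVec_eq hP (hH c hc).1 (hH c hc).2 x

lemma inf'_chordalSq_mem_Icc {H : Finset (Fin n → ℂ)} (hne : H.Nonempty) (x : Fin n → ℂ) :
    H.inf' hne (fun c => chordalSq x c) ∈ Set.Icc 0 1 :=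
  ⟨Finset.le_inf' hne _ fun c _ => chordalSq_nonneg x c,
    (Finset.inf'_le _ hne.choose_spec).trans (chordalSq_le_one _ _)⟩

end Codebook

section DirCov

variable {N : ℕ} (μ : Measure (Fin N → ℂ)) [IsFiniteMeasure μ]

lemma integrable_dirCov_apply (i j : Fin N) :
    Integrable (fun h : Fin N → ℂ => h i * star (h j) / (nsq h : ℂ)) μ := by
  refine Integrable.of_bound (Measurable.aestronglyMeasurable (by fun_prop)) 1
    (ae_of_all _ fun h => ?_)
  rcases (nsq_nonneg h).eq_or_lt with hh | hh
  · simp [← hh]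
  rw [norm_div, norm_mul, norm_star, Complex.norm_real, Real.norm_of_nonneg hh.le,
    div_le_one hh]
  nlinarith [norm_apply_sq_le_nsq h i, norm_apply_sq_le_nsq h j, sq_nonneg (‖h i‖ - ‖h j‖)]

lemma trace_mul_dirCov (A : Matrix (Fin N) (Fin N) ℂ) :
    (A * dirCov μ).trace = ∫ h, star h ⬝ᵥ A *ᵥ h / (nsq h : ℂ) ∂μ := by
  have hint : ∀ i j,
      Integrable (fun h : Fin N → ℂ => A i j * (h j * star (h i) / (nsq h : ℂ))) μ :=
    fun i j => (integrable_dirCov_apply μ j i).const_mul _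
  calc (A * dirCov μ).trace
      = ∑ i, ∑ j, ∫ h, A i j * (h j * star (h i) / (nsq h : ℂ)) ∂μ := by
        simp [trace, mul_apply, dirCov, integral_const_mul]
    _ = ∫ h, ∑ i, ∑ j, A i j * (h j * star (h i) / (nsq h : ℂ)) ∂μ := by
        rw [integral_finsetSum _ fun i _ => integrable_finsetSum _ fun j _ => hint i j]
        exact Finset.sum_congr rfl fun i _ => (integral_finsetSum _ fun j _ => hint i j).symm
    _ = ∫ h, star h ⬝ᵥ A *ᵥ h / (nsq h : ℂ) ∂μ := by
        congr 1 with h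
        simp only [dotProduct, mulVec, Finset.sum_div, Finset.mul_sum, Pi.star_apply]
        exact Finset.sum_congr rfl fun i _ => Finset.sum_congr rfl fun j _ => by ring

lemma re_trace_mul_dirCov {P : Matrix (Fin N) (Fin N) ℂ} (hP : P.IsHermitian)
    (hPP : P * P = P) :
    (P * dirCov μ).trace.re = ∫ h, nsq (P *ᵥ h) / nsq h ∂μ := by
  simp_rw [trace_mul_dirCov, star_dotProduct_mulVec_self hP hPP, ← Complex.ofReal_div,
    integral_complex_ofReal, Complex.ofReal_re]

end DirCov

theorem distortion_partition_general {N K : ℕ}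
    (μ : Measure (Fin N → ℂ)) [IsProbabilityMeasure μ]
    (W : Matrix (Fin N) (Fin K) ℂ) (hW : Wᴴ * W = 1)
    (H : Finset (Fin N → ℂ)) (hne : H.Nonempty)
    (hcode : ∀ c ∈ H, nsq c = 1 ∧ (W * Wᴴ).mulVec c = c) :
    (∫ h, H.inf' hne (fun c => chordalSq h c) ∂μ)
      = (∫ h, (nsq ((W * Wᴴ).mulVec h) / nsq h)
            * H.inf' hne (fun c => chordalSq ((W * Wᴴ).mulVec h) c) ∂μ)
        + (1 - ((W * Wᴴ * dirCov μ).trace).re) := by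
  set P := W * Wᴴ
  have hP : P.IsHermitian := isHermitian_mul_conjTranspose_self W
  have hPP : P * P = P := by
    rw [Matrix.mul_assoc, ← Matrix.mul_assoc Wᴴ, hW, Matrix.one_mul]
  have hg_int : Integrable (fun h => nsq (P *ᵥ h) / nsq h) μ :=
    integrable_of_forall_mem_Icc (by fun_prop) (nsq_mulVec_div_nsq_mem_Icc hP hPP)
  have hgD_int : Integrable (fun h => nsq (P *ᵥ h) / nsq h
      * H.inf' hne (fun c => chordalSq (P *ᵥ h) c)) μ :=
    integrable_of_forall_mem_Icc (by fun_prop) fun h =>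
      unitInterval.mul_mem (nsq_mulVec_div_nsq_mem_Icc hP hPP h) (inf'_chordalSq_mem_Icc hne _)
  have h1g_int : Integrable (fun h => 1 - nsq (P *ᵥ h) / nsq h) μ :=
    (integrable_const 1).sub hg_int
  rw [integral_congr_ae (ae_of_all μ (inf'_chordalSq_eq hP hne hcode)),
    integral_add hgD_int h1g_int, integral_sub (integrable_const 1) hg_int,
    re_trace_mul_dirCov μ hP hPP]
  simp

/-- Proposition 1: the total quantization distortion splits into the in-subspace
distortion and the projection distortion `d_p(W,R̃)`. -/
theorem distortion_partition {N K : ℕ}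
    (μ : Measure (Fin N → ℂ)) [IsProbabilityMeasure μ]
    (W : Matrix (Fin N) (Fin K) ℂ) (hW : Wᴴ * W = 1)
    (H : Finset (Fin N → ℂ)) (hne : H.Nonempty)
    (hcode : ∀ c ∈ H, nsq c = 1 ∧ (W * Wᴴ).mulVec c = c)
    (hnz : ∀ᵐ h ∂μ, h ≠ 0 ∧ (W * Wᴴ).mulVec h ≠ 0) :
    (∫ h, H.inf' hne (fun c => chordalSq h c) ∂μ)
      = (∫ h, (nsq ((W * Wᴴ).mulVec h) / nsq h)
            * H.inf' hne (fun c => chordalSq ((W * Wᴴ).mulVec h) c) ∂μ)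
        + (1 - ((W * Wᴴ * dirCov μ).trace).re) :=
  distortion_partition_general μ W hW H hne hcode
end
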